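/- For points x₁, x₂ in the hyperbolic plane, with ρᵢ = dist(o,xᵢ) and γ = ∠x₁ o x₂ ∈ (0, π], we have 2π·exp((dist(x₁,x₂) − ρ₁ − ρ₂)/2) > γ. Equivalently, e^{dist(x₁,x₂)} > (1/(4π²))·e^{ρ₁+ρ₂}·γ². -/

import Mathlib

/-!
Writing `cos γ = cos²(γ/2) - sin²(γ/2)` turns the hyperbolic law of cosines into
`cosh D = sin²(γ/2) cosh(ρ₁ + ρ₂) + cos²(γ/2) cosh(ρ₁ - ρ₂)`.
Dropping the second term and using `cosh x > eˣ/2` and Jordan's inequality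
`sin(γ/2) ≥ γ/π` gives `e^D ≥ cosh D > e^{ρ₁+ρ₂} γ² / (2π²)`; the first claim is the
square root of the second.
-/

open Real

namespace Real

theorem cosh_mul_cosh_sub_cos_mul_sinh_mul_sinh (ρ₁ ρ₂ γ : ℝ) :
    cosh ρ₁ * cosh ρ₂ - cos γ * (sinh ρ₁ * sinh ρ₂) =
      sin (γ / 2) ^ 2 * cosh (ρ₁ + ρ₂) + cos (γ / 2) ^ 2 * cosh (ρ₁ - ρ₂) := by
  have hcos : cos γ = cos (γ / 2) ^ 2 - sin (γ / 2) ^ 2 := by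
    rw [← cos_two_mul', mul_div_cancel₀ γ two_ne_zero]
  rw [cosh_add, cosh_sub, hcos]
  linear_combination (cosh ρ₁ * cosh ρ₂) * (sin_sq_add_cos_sq (γ / 2)).symm

theorem sin_half_sq_mul_cosh_add_le (ρ₁ ρ₂ γ : ℝ) :
    sin (γ / 2) ^ 2 * cosh (ρ₁ + ρ₂) ≤ cosh ρ₁ * cosh ρ₂ - cos γ * (sinh ρ₁ * sinh ρ₂) := by
  rw [cosh_mul_cosh_sub_cos_mul_sinh_mul_sinh]
  have := cosh_pos (ρ₁ - ρ₂)
  have := sq_nonneg (cos (γ / 2))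
  nlinarith

theorem exp_div_two_lt_cosh (x : ℝ) : exp x / 2 < cosh x := by
  rw [cosh_eq]
  linarith [exp_pos (-x)]

theorem cosh_le_exp {x : ℝ} (hx : 0 ≤ x) : cosh x ≤ exp x := by
  rw [cosh_eq]
  linarith [exp_le_exp.mpr (show -x ≤ x by linarith)]

theorem div_pi_le_sin_half {γ : ℝ} (h₀ : 0 ≤ γ) (hπ : γ ≤ π) : γ / π ≤ sin (γ / 2) := by
  have := mul_le_sin (x := γ / 2) (by linarith) (by linarith)
  rwa [div_mul_div_comm, mul_comm (2 : ℝ) γ, mul_div_mul_right γ π two_ne_zero] at this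

end Real

theorem distH_vs_angle_general
    (ρ₁ ρ₂ D γ : ℝ) (hD : 0 ≤ D)
    (hγ : γ ∈ Set.Ioc 0 π)
    (hlaw : Real.cosh D =
      Real.cosh ρ₁ * Real.cosh ρ₂ - Real.cos γ * (Real.sinh ρ₁ * Real.sinh ρ₂)) :
    2 * π * Real.exp ((D - ρ₁ - ρ₂) / 2) > γ ∧
      Real.exp D > (1 / (4 * π ^ 2)) * Real.exp (ρ₁ + ρ₂) * γ ^ 2 := by
  obtain ⟨hγ₀, hγπ⟩ := hγ
  have hsin : (γ / π) ^ 2 ≤ sin (γ / 2) ^ 2 :=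
    pow_le_pow_left₀ (by positivity) (div_pi_le_sin_half hγ₀.le hγπ) 2
  have key : (1 / (4 * π ^ 2)) * exp (ρ₁ + ρ₂) * γ ^ 2 < exp D :=
    calc (1 / (4 * π ^ 2)) * exp (ρ₁ + ρ₂) * γ ^ 2
        < (γ / π) ^ 2 * (exp (ρ₁ + ρ₂) / 2) := by
          field_simp
          nlinarith [exp_pos (ρ₁ + ρ₂), pow_pos hγ₀ 2]
      _ ≤ sin (γ / 2) ^ 2 * cosh (ρ₁ + ρ₂) :=
          mul_le_mul hsin (exp_div_two_lt_cosh _).le (by positivity) (sq_nonneg _)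
      _ ≤ cosh D := hlaw ▸ sin_half_sq_mul_cosh_add_le ρ₁ ρ₂ γ
      _ ≤ exp D := cosh_le_exp hD
  refine ⟨?_, key⟩
  have hsq : (2 * π * exp ((D - ρ₁ - ρ₂) / 2)) ^ 2 = 4 * π ^ 2 * exp D / exp (ρ₁ + ρ₂) := by
    rw [mul_pow, ← exp_nat_mul, eq_div_iff (exp_pos _).ne', mul_assoc, ← exp_add]
    ring_nf
  refine lt_of_pow_lt_pow_left₀ 2 (by positivity) ?_
  rw [hsq, lt_div_iff₀ (exp_pos _)]
  rw [one_div_mul_eq_div, div_mul_eq_mul_div, div_lt_iff₀ (by positivity)] at key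
  linarith

/-- For points `x₁, x₂` in the hyperbolic plane with `ρᵢ = dist(o,xᵢ)`, angle
`γ = ∠x₁ o x₂ ∈ (0, π]` at the origin, and `D = dist(x₁,x₂)` given by the hyperbolic
law of cosines, we have `2π · exp((D − ρ₁ − ρ₂)/2) > γ`, and equivalently
`e^D > (1/(4π²)) e^{ρ₁+ρ₂} γ²`. -/
theorem distH_vs_angle
    (ρ₁ ρ₂ D γ : ℝ) (hρ₁ : 0 ≤ ρ₁) (hρ₂ : 0 ≤ ρ₂) (hD : 0 ≤ D)
    (hγ : γ ∈ Set.Ioc 0 π)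
    (hlaw : Real.cosh D =
      Real.cosh ρ₁ * Real.cosh ρ₂ - Real.cos γ * (Real.sinh ρ₁ * Real.sinh ρ₂)) :
    2 * π * Real.exp ((D - ρ₁ - ρ₂) / 2) > γ ∧
      Real.exp D > (1 / (4 * π ^ 2)) * Real.exp (ρ₁ + ρ₂) * γ ^ 2 :=
  distH_vs_angle_general ρ₁ ρ₂ D γ hD hγ hlaw
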